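/- Every MacPherson–Vilonen recollement A(ξ) with enough projectives is pre-hereditary, i.e., (L_2 i*)(i_*V) = 0 for every projective object V of A'. Consequently, (L_2 i*) ∘ i_* = 0 in any pre-hereditary recollement. -/

import Mathlib

open CategoryTheory Limits
open ZeroObject

set_option linter.unusedSectionVars false

universe v u v' u' v'' u''

/-- A recollement situation of abelian categories `A'`, `A`, `A''`. -/
structure Recollement (A' : Type u') (A : Type u) (A'' : Type u'')
    [Category.{v'} A'] [Category.{v} A] [Category.{v''} A'']
    [Abelian A'] [Abelian A] [Abelian A''] where
  /-- the functor `i^* : A → A'` -/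
  iStar : A ⥤ A'
  /-- the functor `i_* : A' → A` -/
  iLower : A' ⥤ A
  /-- the functor `i^! : A → A'` -/
  iShriek : A ⥤ A'
  /-- the functor `j_! : A'' → A` -/
  jShriek : A'' ⥤ A
  /-- the functor `j^* : A → A''` -/
  jStar : A ⥤ A''
  /-- the functor `j_* : A'' → A` -/
  jLower : A'' ⥤ A
  iStar_additive : iStar.Additive
  iLower_additive : iLower.Additive
  iShriek_additive : iShriek.Additive
  jShriek_additive : jShriek.Additive
  jStar_additive : jStar.Additive
  jLower_additive : jLower.Additive
  /-- `j_!` is left adjoint to `j^*` -/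
  adj₁ : jShriek ⊣ jStar
  /-- `j^*` is left adjoint to `j_*` -/
  adj₂ : jStar ⊣ jLower
  /-- `i^*` is left adjoint to `i_*` -/
  adj₃ : iStar ⊣ iLower
  /-- `i_*` is left adjoint to `i^!` -/
  adj₄ : iLower ⊣ iShriek
  /-- the unit `Id → j^* j_!` is an isomorphism -/
  isIso_adj₁_unit : IsIso adj₁.unit
  /-- the counit `j^* j_* → Id` is an isomorphism -/
  isIso_adj₂_counit : IsIso adj₂.counit
  /-- the counit `i^* i_* → Id` is an isomorphism -/
  isIso_adj₃_counit : IsIso adj₃.counit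
  /-- the unit `Id → i^! i_*` is an isomorphism -/
  isIso_adj₄_unit : IsIso adj₄.unit
  iLower_full : iLower.Full
  iLower_faithful : iLower.Faithful
  /-- `i_*` is an embedding onto the full subcategory of objects killed by `j^*` -/
  essImage_iLower : ∀ (X : A), iLower.essImage X ↔ IsZero (jStar.obj X)

attribute [instance] Recollement.iStar_additive Recollement.iLower_additive
  Recollement.iShriek_additive Recollement.jShriek_additive Recollement.jStar_additive
  Recollement.jLower_additive Recollement.isIso_adj₁_unit Recollement.isIso_adj₂_counit
  Recollement.isIso_adj₃_counit Recollement.isIso_adj₄_unit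
  Recollement.iLower_full Recollement.iLower_faithful

variable {A' : Type u'} {A : Type u} {A'' : Type u''}
    [Category.{v'} A'] [Category.{v} A] [Category.{v''} A'']
    [Abelian A'] [Abelian A] [Abelian A'']

namespace Recollement

/-- The norm `N : j_! ⟶ j_*`, whose component at `X` corresponds to the identity of `X`
under `Hom(j_!X, j_*X) ≅ Hom(X, j^*j_*X) ≅ Hom(X, X)`. -/
noncomputable def norm (R : Recollement A' A A'') : R.jShriek ⟶ R.jLower where
  app X := (R.adj₁.homEquiv X (R.jLower.obj X)).symm (inv (R.adj₂.counit.app X))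
  naturality {X Y} f := by
    have h : f ≫ inv (R.adj₂.counit.app Y) =
        inv (R.adj₂.counit.app X) ≫ R.jStar.map (R.jLower.map f) := by
      rw [← cancel_mono (R.adj₂.counit.app Y)]
      have := R.adj₂.counit.naturality f
      simp only [Functor.comp_map, Functor.id_map] at this
      simp [this]
    rw [← Adjunction.homEquiv_naturality_left_symm, h,
      Adjunction.homEquiv_naturality_right_symm]

/-- The intermediate extension `j_!* := Im (N : j_! → j_*)`. -/
noncomputable def jMid (R : Recollement A' A A'') : A'' ⥤ A where
  obj X := image (R.norm.app X)
  map {X Y} f := image.map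
    ((Arrow.homMk _ _ (R.norm.naturality f) :
      Arrow.mk (R.norm.app X) ⟶ Arrow.mk (R.norm.app Y)))
  map_id X := by
    have : (Arrow.homMk _ _ (R.norm.naturality (𝟙 X)) :
        Arrow.mk (R.norm.app X) ⟶ Arrow.mk (R.norm.app X)) = 𝟙 (Arrow.mk (R.norm.app X)) := by
      ext <;> simp
    rw [this, image.map_id]
    rfl
  map_comp {X Y Z} f g := by
    rw [← image.map_comp]
    congr 1
    ext <;> simp

end Recollement

section MacPhersonVilonen

variable (F G : A'' ⥤ A') (ξ : F ⟶ G)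

/-- Objects of the MacPherson–Vilonen category `A(ξ)` attached to a natural
transformation `ξ : F ⟶ G`: tuples `(X, V, α : FX → V, β : V → GX)` with
`β ∘ α = ξ_X`. -/
structure MVObj where
  pt : A''
  vec : A'
  α : F.obj pt ⟶ vec
  β : vec ⟶ G.obj pt
  w : α ≫ β = ξ.app pt

/-- Morphisms in the MacPherson–Vilonen category `A(ξ)`. -/
@[ext]
structure MVHom (o₁ o₂ : MVObj F G ξ) where
  f : o₁.pt ⟶ o₂.pt
  φ : o₁.vec ⟶ o₂.vec
  w₁ : o₁.α ≫ φ = F.map f ≫ o₂.α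
  w₂ : φ ≫ o₂.β = o₁.β ≫ G.map f

instance : Category (MVObj F G ξ) where
  Hom := MVHom F G ξ
  id o := ⟨𝟙 o.pt, 𝟙 o.vec, by simp, by simp⟩
  comp {o₁ o₂ o₃} g h :=
    ⟨g.f ≫ h.f, g.φ ≫ h.φ, by
      rw [F.map_comp, Category.assoc, ← h.w₁, ← Category.assoc, g.w₁, Category.assoc], by
      rw [Category.assoc, h.w₂, ← Category.assoc, g.w₂, Category.assoc, ← G.map_comp]⟩
  id_comp f := by apply MVHom.ext <;> simp
  comp_id f := by apply MVHom.ext <;> simp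
  assoc f g h := by apply MVHom.ext <;> simp

@[simp] lemma mv_id_f (o : MVObj F G ξ) : (𝟙 o : MVHom F G ξ o o).f = 𝟙 o.pt := rfl
@[simp] lemma mv_id_φ (o : MVObj F G ξ) : (𝟙 o : MVHom F G ξ o o).φ = 𝟙 o.vec := rfl
@[simp] lemma mv_comp_f {o₁ o₂ o₃ : MVObj F G ξ} (g : o₁ ⟶ o₂) (h : o₂ ⟶ o₃) :
    (g ≫ h).f = g.f ≫ h.f := rfl
@[simp] lemma mv_comp_φ {o₁ o₂ o₃ : MVObj F G ξ} (g : o₁ ⟶ o₂) (h : o₂ ⟶ o₃) :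
    (g ≫ h).φ = g.φ ≫ h.φ := rfl

/-- The canonical functor `i_* : A' → A(ξ)`, `V ↦ (0, V, 0, 0)`. -/
noncomputable def mvILower (hz : IsZero (F.obj (0 : A''))) : A' ⥤ MVObj F G ξ where
  obj V :=
    { pt := 0
      vec := V
      α := 0
      β := 0
      w := by rw [zero_comp]; exact (hz.eq_of_src 0 (ξ.app 0)) }
  map {V W} φ :=
    { f := 𝟙 0
      φ := φ
      w₁ := by simp
      w₂ := by simp }
  map_id V := by apply MVHom.ext <;> simp
  map_comp f g := by apply MVHom.ext <;> simp

/-- The canonical functor `j^* : A(ξ) → A''`, `(X, V, α, β) ↦ X`. -/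
def mvJStar : MVObj F G ξ ⥤ A'' where
  obj o := o.pt
  map m := m.f
  map_id _ := rfl
  map_comp _ _ := rfl

/-- The canonical exact retraction `r : A(ξ) → A'`, `(X, V, α, β) ↦ V`. -/
def mvVec : MVObj F G ξ ⥤ A' where
  obj o := o.vec
  map m := m.φ
  map_id _ := rfl
  map_comp _ _ := rfl

end MacPhersonVilonen

/-!
Both statements reduce to the vanishing of `L₁ i^*` by dimension shifting: for a right exact `T`
and `0 → K → P → M → 0` with `P` projective, `L_{n+2}T(M) ≅ L_{n+1}T(K)`, and `L₁T(M) = 0` iff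
`T(K → P)` is mono.

In `A(ξ)` the functor `i^*` is `coker α`. Every object is a quotient of one with split mono `α`,
so `α` is mono on projectives; it stays mono on the kernel `K` of any `P ↠ i_*V`, because `j^*`
of `K → P` is an isomorphism. Right exactness of `F` then shows that `coker α` keeps `K' → P'`
mono for any projective cover `P' ↠ K`, hence `L₂ i^*(i_*V) = L₁ i^*(K) = 0`.

In a pre-hereditary recollement, an epimorphism `ρ : P ↠ i_*W` factors through the unit
`η : P ↠ i_*i^*P`, where `i^*P` is projective. This gives an extension
`ker η ↪ ker ρ ↠ i_*(ker ρ̂)`. Here `L₁ i^*(ker η) = L₂ i^*(i_*i^*P)` vanishes by hypothesis, and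
`L₁ i^*` vanishes on `i_*`-objects because `Hom(j_!, i_*) = 0`; hence `L₂ i^*(i_*W) = L₁ i^*(ker ρ)`
vanishes too.
-/

namespace CategoryTheory

variable {C : Type*} [Category* C] [Abelian C]

lemma ShortComplex.Exact.exact_comp_iff_mono {S : ShortComplex C} (hS : S.Exact) [Epi S.g]
    {Y : C} (m : S.X₃ ⟶ Y) :
    (ShortComplex.mk S.f (S.g ≫ m) (by simp)).Exact ↔ Mono m := by
  refine ⟨fun h => Preadditive.mono_of_cancel_zero _ fun x hx => ?_, fun _ => ?_⟩
  · obtain ⟨_, π, _, y, hy⟩ := surjective_up_to_refinements_of_epi S.g x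
    obtain ⟨_, π', _, z, hz⟩ := h.exact_up_to_refinements y (by simp [← reassoc_of% hy, hx])
    rw [← cancel_epi π, ← cancel_epi π', hy, reassoc_of% hz]
    simp
  · rw [ShortComplex.exact_iff_exact_up_to_refinements]
    intro _ x hx
    exact hS.exact_up_to_refinements x (by simpa [← cancel_mono m] using hx)

lemma ShortComplex.Exact.epi_comp_f {S : ShortComplex C} (hS : S.Exact) {X : C} (e : X ⟶ S.X₁)
    [Epi e] : (ShortComplex.mk (e ≫ S.f) S.g (by simp)).Exact := by
  rw [ShortComplex.exact_iff_exact_up_to_refinements]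
  intro _ x hx
  obtain ⟨_, π, _, y, hy⟩ := hS.exact_up_to_refinements x hx
  obtain ⟨_, π', _, z, hz⟩ := surjective_up_to_refinements_of_epi e y
  exact ⟨_, π' ≫ π, epi_comp _ _, z, by simp [hy, reassoc_of% hz]⟩

lemma exact_cokernel {X Y : C} (f : X ⟶ Y) :
    (ShortComplex.mk f (cokernel.π f) (cokernel.condition f)).Exact :=
  ShortComplex.exact_of_g_is_cokernel _ (cokernelIsCokernel f)

lemma shortExact_kernel {Y Z : C} (g : Y ⟶ Z) [Epi g] :
    (ShortComplex.mk (kernel.ι g) g (kernel.condition g)).ShortExact where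
  exact := ShortComplex.exact_of_f_is_kernel _ (kernelIsKernel g)

lemma shortExact_kernel_comp {X Y Z : C} (f : X ⟶ Y) [Epi f] (g : Y ⟶ Z) :
    (ShortComplex.mk (kernel.map f (f ≫ g) (𝟙 _) g (by simp))
      (kernel.map (f ≫ g) g f (𝟙 _) (by simp)) (by ext; simp)).ShortExact where
  exact := (kernelCokernelCompSequence_exact f g).exact 0
  mono_f := inferInstanceAs (Mono ((kernelCokernelCompSequence f g).map' 0 1))
  epi_g := ((kernelCokernelCompSequence_exact f g).exact 1).epi_f
    (show kernelCokernelCompSequence.δ f g = 0 by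
      rw [kernelCokernelCompSequence.δ_fac, cokernel.π_of_epi, comp_zero, neg_zero])

lemma ShortComplex.ShortExact.isIso_kernel_lift {S : ShortComplex C} (hS : S.ShortExact) :
    IsIso (kernel.lift S.g S.f S.zero) := by
  have := hS.mono_f
  have : Mono (kernel.lift S.g S.f S.zero) := mono_of_mono_fac (kernel.lift_ι _ _ _)
  have := hS.exact.epi_kernelLift
  exact isIso_of_mono_of_epi _

namespace ProjectiveResolution

variable {Z : C} (Q : ProjectiveResolution Z)

/-- `Q.π.f 0`, typed with target `Z` rather than the defeq `((single₀ C).obj Z).X 0`. -/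
noncomputable def augmentation : Q.complex.X 0 ⟶ Z := Q.π.f 0

@[simp]
lemma d_comp_augmentation : Q.complex.d 1 0 ≫ Q.augmentation = 0 :=
  Q.complex_d_comp_π_f_zero

@[simp]
lemma d_comp_augmentation_assoc {Y : C} (f : Z ⟶ Y) :
    Q.complex.d 1 0 ≫ Q.augmentation ≫ f = 0 := by
  rw [← Category.assoc, d_comp_augmentation, zero_comp]

lemma exact_augmentation : (ShortComplex.mk _ _ Q.d_comp_augmentation).Exact :=
  Q.exact₀

instance : Epi Q.augmentation :=
  inferInstanceAs (Epi (Q.π.f 0))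

end ProjectiveResolution

namespace ShortComplex.ShortExact

variable {S : ShortComplex C} (hS : S.ShortExact) [Projective S.X₂]

/-- The resolution `⋯ ⟶ Q₁ ⟶ Q₀ ⟶ S.X₂` of `S.X₃`. -/
noncomputable def projectiveResolution (Q : ProjectiveResolution S.X₁) :
    ProjectiveResolution S.X₃ where
  complex := Q.complex.augment (Q.augmentation ≫ S.f) (by simp)
  projective n := by cases n <;> dsimp <;> infer_instance
  π := (ChainComplex.toSingle₀Equiv _ _).symm ⟨S.g, show (Q.augmentation ≫ S.f) ≫ S.g = 0 by simp⟩
  quasiIso := ⟨fun n => by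
    cases n with
    | zero =>
      rw [ChainComplex.quasiIsoAt₀_iff, ShortComplex.quasiIso_iff_of_zeros' _ rfl rfl rfl]
      refine (ShortComplex.exact_and_epi_g_iff_of_iso ?_).2
        ⟨hS.exact.epi_comp_f Q.augmentation, hS.epi_g⟩
      refine ShortComplex.isoMk (Iso.refl _) (Iso.refl _) (Iso.refl _)
        ((Category.id_comp _).trans (Category.comp_id _).symm) ?_
      have h := ChainComplex.toSingle₀Equiv_symm_apply_f_zero
        (C := Q.complex.augment (Q.augmentation ≫ S.f) (by simp)) S.g
        (show (Q.augmentation ≫ S.f) ≫ S.g = 0 by simp)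
      exact (Category.id_comp _).trans (h.symm.trans (Category.comp_id _).symm)
    | succ n =>
      rw [quasiIsoAt_iff_exactAt' _ _ (ChainComplex.exactAt_succ_single_obj _ _)]
      cases n with
      | zero =>
        rw [HomologicalComplex.exactAt_iff' _ 2 1 0 (by simp) (by simp)]
        have := hS.mono_f
        exact (Q.exact_augmentation.exact_comp_iff_mono S.f).2 inferInstance
      | succ n =>
        rw [HomologicalComplex.exactAt_iff' _ (n + 3) (n + 2) (n + 1) (by simp) (by simp)]
        exact Q.exact_succ n⟩

end ShortComplex.ShortExact

namespace Functor

variable {D : Type*} [Category* D] [Abelian D] [EnoughProjectives C] (T : C ⥤ D) [T.Additive]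

lemma isZero_leftDerived_obj_iff_exactAt {M : C} (R : ProjectiveResolution M) (n : ℕ) :
    IsZero ((T.leftDerived n).obj M) ↔
      ((T.mapHomologicalComplex _).obj R.complex).ExactAt n := by
  rw [HomologicalComplex.exactAt_iff_isZero_homology]
  exact (R.isoLeftDerivedObj T n).isZero_iff

section DimensionShift

variable {S : ShortComplex C} (hS : S.ShortExact) [Projective S.X₂]

include hS in
lemma isZero_leftDerived_succ_succ_iff (n : ℕ) :
    IsZero ((T.leftDerived (n + 2)).obj S.X₃) ↔ IsZero ((T.leftDerived (n + 1)).obj S.X₁) := by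
  let Q := ProjectiveResolution.of S.X₁
  rw [T.isZero_leftDerived_obj_iff_exactAt (hS.projectiveResolution Q),
    T.isZero_leftDerived_obj_iff_exactAt Q,
    HomologicalComplex.exactAt_iff' _ (n + 3) (n + 2) (n + 1) (by simp) (by simp),
    HomologicalComplex.exactAt_iff' _ (n + 2) (n + 1) n (by simp) (by simp)]
  exact Iff.rfl

include hS in
lemma isZero_leftDerived_one_iff_mono [PreservesFiniteColimits T] :
    IsZero ((T.leftDerived 1).obj S.X₃) ↔ Mono (T.map S.f) := by
  let Q := ProjectiveResolution.of S.X₁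
  have hQ : (ShortComplex.mk (T.map (Q.complex.d 1 0)) (T.map Q.augmentation)
      (by simp [← T.map_comp])).Exact :=
    Q.exact_augmentation.map_of_epi_of_preservesCokernel T inferInstance inferInstance
  rw [T.isZero_leftDerived_obj_iff_exactAt (hS.projectiveResolution Q),
    HomologicalComplex.exactAt_iff' _ 2 1 0 (by simp) (by simp), ← hQ.exact_comp_iff_mono]
  exact ShortComplex.exact_iff_of_iso
    (ShortComplex.isoMk (Iso.refl _) (Iso.refl _) (Iso.refl _)
      ((Category.id_comp _).trans (Category.comp_id _).symm)
      ((Category.id_comp _).trans ((T.map_comp _ _).symm.trans (Category.comp_id _).symm)))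

end DimensionShift

variable [PreservesFiniteColimits T] {S : ShortComplex C} (hS : S.ShortExact)

include hS in
lemma mono_map_f_of_isZero_leftDerived_one (h : IsZero ((T.leftDerived 1).obj S.X₃)) :
    Mono (T.map S.f) := by
  have := hS.epi_g
  have := hS.isIso_kernel_lift
  suffices Mono (T.map (kernel.ι S.g)) by
    rw [← kernel.lift_ι S.g S.f S.zero, T.map_comp]
    exact mono_comp _ _
  -- A four-lemma chase comparing `T(ker ρ) → T(ker (ρ ≫ g)) ↠ T(ker g)` with
  -- `T(ker ρ) → T P ↠ T X₂`, where `T(ker (ρ ≫ g) ⟶ P)` is mono because `L₁T(X₃) = 0`.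
  let ρ := Projective.π S.X₂
  let j := kernel.map ρ (ρ ≫ S.g) (𝟙 _) S.g (by simp)
  let k := kernel.map (ρ ≫ S.g) S.g ρ (𝟙 _) (by simp)
  have := (shortExact_kernel_comp ρ S.g).epi_g
  have := (T.isZero_leftDerived_one_iff_mono (shortExact_kernel (ρ ≫ S.g))).1 h
  have hTρ : (ShortComplex.mk (T.map (kernel.ι ρ)) (T.map ρ) (by simp [← T.map_comp])).Exact :=
    (shortExact_kernel ρ).exact.map_of_epi_of_preservesCokernel T inferInstance inferInstance
  refine Preadditive.mono_of_cancel_zero _ fun x hx => ?_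
  obtain ⟨_, π₁, _, y, hy⟩ := surjective_up_to_refinements_of_epi (T.map k) x
  obtain ⟨_, π₂, _, z, hz⟩ := hTρ.exact_up_to_refinements (y ≫ T.map (kernel.ι (ρ ≫ S.g))) (by
    dsimp only
    have : kernel.ι (ρ ≫ S.g) ≫ ρ = k ≫ kernel.ι S.g := by simp [k]
    rw [Category.assoc, ← T.map_comp, this, T.map_comp, reassoc_of% hy.symm, hx, comp_zero])
  dsimp only at hz
  have hyz : π₂ ≫ y = z ≫ T.map j := by
    rw [← cancel_mono (T.map (kernel.ι (ρ ≫ S.g))), Category.assoc, hz, Category.assoc]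
    simp [j, ← T.map_comp]
  rw [← cancel_epi π₁, ← cancel_epi π₂, hy, reassoc_of% hyz, ← T.map_comp,
    show j ≫ k = 0 by ext; simp [j, k]]
  simp

include hS in
lemma isZero_leftDerived_one_of_shortExact (h₁ : IsZero ((T.leftDerived 1).obj S.X₁))
    (h₃ : IsZero ((T.leftDerived 1).obj S.X₃)) : IsZero ((T.leftDerived 1).obj S.X₂) := by
  have := hS.epi_g
  have := hS.isIso_kernel_lift
  let ρ := Projective.π S.X₂
  have := T.mono_map_f_of_isZero_leftDerived_one (shortExact_kernel_comp ρ S.g)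
    (((T.leftDerived 1).mapIso (asIso (kernel.lift S.g S.f S.zero))).isZero_iff.1 h₁)
  have := (T.isZero_leftDerived_one_iff_mono (shortExact_kernel (ρ ≫ S.g))).1 h₃
  have hfac : kernel.map ρ (ρ ≫ S.g) (𝟙 _) S.g (by simp) ≫ kernel.ι (ρ ≫ S.g) = kernel.ι ρ := by
    simp
  rw [T.isZero_leftDerived_one_iff_mono (shortExact_kernel ρ)]
  dsimp only
  rw [← hfac, T.map_comp]
  exact mono_comp _ _

end Functor

end CategoryTheory

namespace Recollement

variable (R : Recollement A' A A'')

lemma isZero_jStar_obj_iLower_obj (W : A') : IsZero (R.jStar.obj (R.iLower.obj W)) :=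
  (R.essImage_iLower _).1 (R.iLower.obj_mem_essImage W)

lemma hom_jShriek_iLower_eq_zero {X : A''} {W : A'} (u : R.jShriek.obj X ⟶ R.iLower.obj W) :
    u = 0 :=
  (R.adj₁.homEquiv _ _).injective ((R.isZero_jStar_obj_iLower_obj W).eq_of_tgt _ _)

lemma isZero_of_isZero_iStar_obj_of_isZero_jStar_obj {M : A} (h₁ : IsZero (R.iStar.obj M))
    (h₂ : IsZero (R.jStar.obj M)) : IsZero M := by
  obtain ⟨W, ⟨e⟩⟩ := (R.essImage_iLower M).2 h₂
  refine (R.iLower.map_isZero ?_).of_iso e.symm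
  exact h₁.of_iso ((asIso (R.adj₃.counit.app W)).symm ≪≫ R.iStar.mapIso e)

instance epi_unit_app (M : A) : Epi (R.adj₃.unit.app M) := by
  have := R.adj₃.leftAdjoint_preservesColimits
  have := R.adj₂.leftAdjoint_preservesColimits
  have : IsIso (R.iStar.map (R.adj₃.unit.app M)) :=
    isIso_of_comp_hom_eq_id _ (R.adj₃.left_triangle_components M)
  apply Preadditive.epi_of_isZero_cokernel
  apply R.isZero_of_isZero_iStar_obj_of_isZero_jStar_obj
  · exact (isZero_cokernel_of_epi _).of_iso (PreservesCokernel.iso R.iStar _)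
  · exact ((R.isZero_jStar_obj_iLower_obj _).of_epi (cokernel.π _)).of_iso
      (PreservesCokernel.iso R.jStar _)

lemma exact_counit_unit (M : A) :
    (ShortComplex.mk (X₁ := R.jShriek.obj (R.jStar.obj M)) (X₂ := M)
      (X₃ := R.iLower.obj (R.iStar.obj M)) (R.adj₁.counit.app M) (R.adj₃.unit.app M)
      (R.hom_jShriek_iLower_eq_zero _)).Exact := by
  -- `j^*` inverts the counit, so its cokernel is some `i_*W`, through which the unit factors.
  have := R.adj₂.leftAdjoint_preservesColimits
  have : IsIso (R.jStar.map (R.adj₁.counit.app M)) :=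
    isIso_of_hom_comp_eq_id _ (R.adj₁.right_triangle_components M)
  obtain ⟨W, ⟨e⟩⟩ := (R.essImage_iLower _).2
    ((isZero_cokernel_of_epi _).of_iso (PreservesCokernel.iso R.jStar (R.adj₁.counit.app M)))
  have hfac : R.adj₃.unit.app M ≫ R.iLower.map ((R.adj₃.homEquiv M W).symm
      (cokernel.π (R.adj₁.counit.app M) ≫ e.inv)) = cokernel.π _ ≫ e.inv :=
    (R.adj₃.homEquiv_unit _ _ _).symm.trans (Equiv.apply_symm_apply _ _)
  rw [ShortComplex.exact_iff_exact_up_to_refinements]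
  intro _ x hx
  refine (exact_cokernel _).exact_up_to_refinements x ?_
  change x ≫ R.adj₃.unit.app M = 0 at hx
  rw [← cancel_mono e.inv, Category.assoc, ← hfac, reassoc_of% hx, zero_comp, zero_comp]

lemma isZero_leftDerived_one_iStar_obj_iLower_obj [EnoughProjectives A] (W : A') :
    IsZero ((R.iStar.leftDerived 1).obj (R.iLower.obj W)) := by
  have := R.adj₃.leftAdjoint_preservesColimits
  obtain ⟨P, _, ρ, _⟩ : ∃ (P : A) (_ : Projective P) (ρ : P ⟶ R.iLower.obj W), Epi ρ :=
    ⟨_, inferInstance, Projective.π _, inferInstance⟩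
  rw [R.iStar.isZero_leftDerived_one_iff_mono (shortExact_kernel ρ)]
  dsimp only
  apply R.iLower.mono_of_mono_map
  refine Preadditive.mono_of_cancel_zero _ fun a ha => ?_
  obtain ⟨_, π₁, _, n, hn⟩ := surjective_up_to_refinements_of_epi (R.adj₃.unit.app _) a
  have hnat : kernel.ι ρ ≫ R.adj₃.unit.app _ =
      R.adj₃.unit.app _ ≫ R.iLower.map (R.iStar.map (kernel.ι ρ)) :=
    R.adj₃.unit.naturality _
  obtain ⟨_, π₂, _, t, ht⟩ := (R.exact_counit_unit P).exact_up_to_refinements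
    (n ≫ kernel.ι ρ) (by
      rw [Category.assoc, hnat, reassoc_of% hn.symm, ha, comp_zero])
  have hγ : π₂ ≫ n = t ≫ kernel.lift ρ (R.adj₁.counit.app P) (R.hom_jShriek_iLower_eq_zero _) := by
    rw [← cancel_mono (kernel.ι ρ)]
    simpa using ht
  rw [← cancel_epi π₁, ← cancel_epi π₂, hn, reassoc_of% hγ,
    R.hom_jShriek_iLower_eq_zero (kernel.lift ρ _ _ ≫ _)]
  simp

lemma isZero_leftDerived_two_iStar_obj_iLower_obj [EnoughProjectives A]
    (h : ∀ V : A', Projective V → IsZero ((R.iStar.leftDerived 2).obj (R.iLower.obj V)))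
    (W : A') : IsZero ((R.iStar.leftDerived 2).obj (R.iLower.obj W)) := by
  have := R.adj₃.leftAdjoint_preservesColimits
  have := R.adj₃.rightAdjoint_preservesLimits
  have := R.adj₄.leftAdjoint_preservesColimits
  obtain ⟨P, _, ρ, _⟩ : ∃ (P : A) (_ : Projective P) (ρ : P ⟶ R.iLower.obj W), Epi ρ :=
    ⟨_, inferInstance, Projective.π _, inferInstance⟩
  let ρ' := (R.adj₃.homEquiv P W).symm ρ
  have hρ : R.adj₃.unit.app P ≫ R.iLower.map ρ' = ρ :=
    (R.adj₃.homEquiv_unit _ _ _).symm.trans (Equiv.apply_symm_apply _ _)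
  have : Epi (R.adj₃.unit.app P ≫ R.iLower.map ρ') := hρ ▸ inferInstance
  have : Projective (R.iStar.obj P) := R.adj₃.map_projective P inferInstance
  rw [R.iStar.isZero_leftDerived_succ_succ_iff
    (shortExact_kernel (R.adj₃.unit.app P ≫ R.iLower.map ρ')) 0]
  refine R.iStar.isZero_leftDerived_one_of_shortExact
    (shortExact_kernel_comp (R.adj₃.unit.app P) (R.iLower.map ρ')) ?_ ?_
  · exact (R.iStar.isZero_leftDerived_succ_succ_iff (shortExact_kernel _) 0).1 (h _ this)
  · exact ((R.iStar.leftDerived 1).mapIso (PreservesKernel.iso R.iLower ρ')).isZero_iff.1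
      (R.isZero_leftDerived_one_iStar_obj_iLower_obj _)

end Recollement

namespace MVObj

variable {F G : A'' ⥤ A'} {ξ : F ⟶ G}

/-- Every `M` is a quotient of `cover M`, whose `α` is a split monomorphism. -/
noncomputable abbrev cover (M : MVObj F G ξ) : MVObj F G ξ where
  pt := M.pt
  vec := F.obj M.pt ⊞ M.vec
  α := biprod.inl
  β := biprod.desc (ξ.app M.pt) M.β
  w := by simp

@[simps]
noncomputable def coverπ (M : MVObj F G ξ) : cover M ⟶ M where
  f := 𝟙 _
  φ := biprod.desc M.α (𝟙 _)
  w₁ := by simp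
  w₂ := by apply biprod.hom_ext' <;> simp [M.w]

variable (F G ξ) in
noncomputable abbrev cokerα : MVObj F G ξ ⥤ A' where
  obj M := cokernel M.α
  map h := cokernel.map _ _ (F.map h.f) h.φ h.w₁
  map_id M := by ext; simp
  map_comp g h := by ext; simp

noncomputable def cokerαAdjunction [PreservesFiniteLimits G] (hz : IsZero (F.obj (0 : A''))) :
    cokerα F G ξ ⊣ mvILower F G ξ hz :=
  Adjunction.mkOfHomEquiv
    { homEquiv M V :=
        { toFun u :=
            { f := 0
              φ := cokernel.π M.α ≫ u
              w₁ := by simp [mvILower, cokernel.condition_assoc]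
              w₂ := by
                rw [G.map_zero, comp_zero]
                exact comp_zero }
          invFun h := cokernel.desc M.α h.φ (by simpa [mvILower] using h.w₁)
          left_inv u := coequalizer.hom_ext (cokernel.π_desc _ _ _)
          right_inv h := by
            apply MVHom.ext
            · exact (isZero_zero A'').eq_of_tgt _ _
            · exact cokernel.π_desc _ _ _ }
      homEquiv_naturality_left_symm g h := by
        refine coequalizer.hom_ext ?_
        simp only [cokernel.map, cokernel.π_desc_assoc, Category.assoc]
        exact (cokernel.π_desc _ _ _).trans (congrArg (g.φ ≫ ·) (cokernel.π_desc _ _ _)).symm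
      homEquiv_naturality_right h g := by
        apply MVHom.ext
        · exact (isZero_zero A'').eq_of_tgt _ _
        · exact (Category.assoc _ _ _).symm }

variable [Abelian (MVObj F G ξ)]

omit [Abelian A'] [Abelian A''] in
lemma isZero_of_isZero_pt_of_isZero_vec {M : MVObj F G ξ} (h₁ : IsZero M.pt)
    (h₂ : IsZero M.vec) : IsZero M := by
  rw [IsZero.iff_id_eq_zero]
  apply MVHom.ext
  · exact h₁.eq_of_src _ _
  · exact h₂.eq_of_src _ _

lemma epi_of_epi_f_of_epi_φ [PreservesFiniteColimits (mvVec F G ξ)]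
    [PreservesFiniteColimits (mvJStar F G ξ)] {M N : MVObj F G ξ} (h : M ⟶ N) (h₁ : Epi h.f)
    (h₂ : Epi h.φ) : Epi h := by
  have : Epi ((mvJStar F G ξ).map h) := h₁
  have : Epi ((mvVec F G ξ).map h) := h₂
  apply Preadditive.epi_of_isZero_cokernel
  apply isZero_of_isZero_pt_of_isZero_vec
  · exact (isZero_cokernel_of_epi _).of_iso (PreservesCokernel.iso (mvJStar F G ξ) h)
  · exact (isZero_cokernel_of_epi _).of_iso (PreservesCokernel.iso (mvVec F G ξ) h)

instance [PreservesFiniteColimits (mvVec F G ξ)] [PreservesFiniteColimits (mvJStar F G ξ)]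
    (M : MVObj F G ξ) : Epi (coverπ M) :=
  epi_of_epi_f_of_epi_φ _ (inferInstanceAs (Epi (𝟙 _)))
    (epi_of_epi_fac (biprod.inr_desc M.α (𝟙 _)))

lemma mono_α_of_projective [PreservesFiniteColimits (mvVec F G ξ)]
    [PreservesFiniteColimits (mvJStar F G ξ)] (P : MVObj F G ξ) [Projective P] : Mono P.α := by
  obtain ⟨σ, hσ⟩ : ∃ σ, σ ≫ coverπ P = 𝟙 P := ⟨_, Projective.factorThru_comp _ _⟩
  have hσf : σ.f = 𝟙 _ := by simpa using congrArg MVHom.f hσ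
  have hw := σ.w₁
  rw [hσf, CategoryTheory.Functor.map_id, Category.id_comp] at hw
  exact mono_of_mono_fac (show P.α ≫ σ.φ ≫ biprod.fst = 𝟙 _ by rw [reassoc_of% hw]; simp)

variable [PreservesFiniteLimits (mvVec F G ξ)]
  [PreservesFiniteLimits (mvJStar F G ξ)] [PreservesFiniteColimits (mvJStar F G ξ)]

omit [Abelian A'] in
lemma mono_α_kernel_of_isZero_pt {M N : MVObj F G ξ} (g : M ⟶ N) (hα : Mono M.α)
    (hN : IsZero N.pt) : Mono (kernel g).α := by
  have : Epi ((mvJStar F G ξ).map (kernel.ι g)) :=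
    ((ShortComplex.kernelSequence_exact g).map (mvJStar F G ξ)).epi_f (hN.eq_of_tgt _ _)
  have : IsIso (kernel.ι g).f := isIso_of_mono_of_epi ((mvJStar F G ξ).map (kernel.ι g))
  have : Mono (kernel.ι g).φ := inferInstanceAs (Mono ((mvVec F G ξ).map (kernel.ι g)))
  exact mono_of_mono_fac (kernel.ι g).w₁

lemma mono_cokerα_map_f [PreservesFiniteColimits F] {S : ShortComplex (MVObj F G ξ)}
    (hS : S.ShortExact) (hα : Mono S.X₃.α) : Mono ((cokerα F G ξ).map S.f) := by
  have := hS.epi_g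
  have : Epi S.g.f := inferInstanceAs (Epi ((mvJStar F G ξ).map S.g))
  have hfg₁ : S.f.f ≫ S.g.f = 0 :=
    (congrArg MVHom.f S.zero).trans ((mvJStar F G ξ).map_zero _ _)
  have hfg₂ : S.f.φ ≫ S.g.φ = 0 :=
    (congrArg MVHom.φ S.zero).trans ((mvVec F G ξ).map_zero _ _)
  have hF : (ShortComplex.mk (F.map S.f.f) (F.map S.g.f)
      (by rw [← F.map_comp, hfg₁, F.map_zero])).Exact :=
    (hS.exact.map (mvJStar F G ξ)).map_of_epi_of_preservesCokernel F this inferInstance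
  have := hS.mono_f
  have : Mono S.f.φ := inferInstanceAs (Mono ((mvVec F G ξ).map S.f))
  refine Preadditive.mono_of_cancel_zero _ fun x hx => ?_
  obtain ⟨_, π₁, _, w, hw⟩ := surjective_up_to_refinements_of_epi (cokernel.π S.X₁.α) x
  obtain ⟨_, π₂, _, t, ht⟩ := (exact_cokernel S.X₂.α).exact_up_to_refinements
    (w ≫ S.f.φ) (by
      have hmap : cokernel.π S.X₁.α ≫ (cokerα F G ξ).map S.f = S.f.φ ≫ cokernel.π S.X₂.α :=
        cokernel.π_desc _ _ _
      rw [Category.assoc, ← hmap, ← Category.assoc, ← hw, Category.assoc, hx, comp_zero])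
  have ht' : t ≫ F.map S.g.f = 0 := by
    rw [← cancel_mono S.X₃.α, Category.assoc, ← S.g.w₁, ← Category.assoc, ← ht]
    simp [hfg₂]
  obtain ⟨_, π₃, _, s, hs⟩ := hF.exact_up_to_refinements t ht'
  have hsw : π₃ ≫ π₂ ≫ w = s ≫ S.X₁.α := by
    rw [← cancel_mono S.f.φ]
    simp only [Category.assoc]
    rw [ht, reassoc_of% hs, ← S.f.w₁]
  rw [← cancel_epi π₁, ← cancel_epi π₂, ← cancel_epi π₃, hw, reassoc_of% hsw]
  simp

theorem isZero_leftDerived_two_obj_mvILower_obj [PreservesFiniteColimits (mvVec F G ξ)]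
    [EnoughProjectives (MVObj F G ξ)] [PreservesFiniteColimits F] [PreservesFiniteLimits G]
    (hz : IsZero (F.obj (0 : A''))) (T : MVObj F G ξ ⥤ A') [T.Additive]
    (adj : T ⊣ mvILower F G ξ hz) (V : A') :
    IsZero ((T.leftDerived 2).obj ((mvILower F G ξ hz).obj V)) := by
  have := adj.leftAdjoint_preservesColimits
  obtain ⟨P, _, ρ, _⟩ : ∃ (P : MVObj F G ξ) (_ : Projective P)
      (ρ : P ⟶ (mvILower F G ξ hz).obj V), Epi ρ :=
    ⟨_, inferInstance, Projective.π _, inferInstance⟩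
  obtain ⟨P', _, ρ', _⟩ : ∃ (P' : MVObj F G ξ) (_ : Projective P') (ρ' : P' ⟶ kernel ρ),
      Epi ρ' := ⟨_, inferInstance, Projective.π _, inferInstance⟩
  rw [T.isZero_leftDerived_succ_succ_iff (shortExact_kernel ρ) 0,
    T.isZero_leftDerived_one_iff_mono (shortExact_kernel ρ')]
  have := mono_cokerα_map_f (shortExact_kernel ρ')
    (mono_α_kernel_of_isZero_pt ρ (mono_α_of_projective P) (isZero_zero A''))
  dsimp only
  rw [← NatIso.naturality_1 (adj.leftAdjointUniq (cokerαAdjunction hz)).symm]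
  infer_instance

end MVObj

/-- Every MacPherson–Vilonen recollement with enough projectives is pre-hereditary,
i.e. `(L₂ i^*)(i_* V) = 0` for every projective `V` of `A'`; consequently
`(L₂ i^*) ∘ i_* = 0` in any pre-hereditary recollement. -/
theorem mv_recollement_preHereditary :
    (∀ (F G : A'' ⥤ A') (ξ : F ⟶ G),
      PreservesFiniteColimits F → PreservesFiniteLimits G →
      ∀ (hz : IsZero (F.obj (0 : A''))),
      ∀ [Abelian (MVObj F G ξ)] [EnoughProjectives (MVObj F G ξ)]
        [PreservesFiniteLimits (mvVec F G ξ)] [PreservesFiniteColimits (mvVec F G ξ)]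
        [PreservesFiniteLimits (mvJStar F G ξ)] [PreservesFiniteColimits (mvJStar F G ξ)],
      ∀ (S : Recollement A' (MVObj F G ξ) A''),
        S.iLower = mvILower F G ξ hz → S.jStar = mvJStar F G ξ →
        ∀ (V : A'), Projective V →
          IsZero ((S.iStar.leftDerived 2).obj (S.iLower.obj V))) ∧
    (∀ (R : Recollement A' A A'') [EnoughProjectives A],
      (∀ (V : A'), Projective V →
        IsZero ((R.iStar.leftDerived 2).obj (R.iLower.obj V))) →
      ∀ W : A', IsZero ((R.iStar.leftDerived 2).obj (R.iLower.obj W))) := by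
  refine ⟨fun F G ξ _ _ hz _ _ _ _ _ _ S hi _ V _ => ?_,
    fun R _ h W => R.isZero_leftDerived_two_iStar_obj_iLower_obj h W⟩
  rw [hi]
  exact MVObj.isZero_leftDerived_two_obj_mvILower_obj hz S.iStar (hi ▸ S.adj₃) V
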